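/- Let G be K₃,₃ with two nonadjacent vertices x, y as terminals. Then for every edge e of G, both (G + xy) − e and (G + xy)/e are planar; consequently G + xy is critical for planarity. -/

import Mathlib

/-- `H` is a minor of `G`: there is a family of disjoint nonempty connected branch sets
indexed by the vertices of `H` such that adjacency in `H` is realized by edges of `G`. -/
def IsMinor {W V : Type} (H : SimpleGraph W) (G : SimpleGraph V) : Prop :=
  ∃ f : W → Set V,
    (∀ w, (f w).Nonempty) ∧
    (∀ w, (G.induce (f w)).Connected) ∧
    (Pairwise fun w₁ w₂ => Disjoint (f w₁) (f w₂)) ∧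
    ∀ ⦃w₁ w₂ : W⦄, H.Adj w₁ w₂ → ∃ v₁ ∈ f w₁, ∃ v₂ ∈ f w₂, G.Adj v₁ v₂

/-- Planarity, via the Kuratowski–Wagner characterization: no `K₅` and no `K₃,₃` minor. -/
def Planar {V : Type} (G : SimpleGraph V) : Prop :=
  ¬ IsMinor (⊤ : SimpleGraph (Fin 5)) G ∧
  ¬ IsMinor (completeBipartiteGraph (Fin 3) (Fin 3)) G

/-- `K₃,₃` on vertex set `Fin 6`, with parts `{0,1,2}` and `{3,4,5}`. -/
def K33 : SimpleGraph (Fin 6) :=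
  SimpleGraph.fromRel fun a b => a.val < 3 ∧ 3 ≤ b.val

/-- `K₃,₃` together with the extra edge `xy` joining the nonadjacent terminals
`x = 0` and `y = 1`. -/
def GplusK33 : SimpleGraph (Fin 6) :=
  K33 ⊔ SimpleGraph.fromRel fun a b => a = 0 ∧ b = 1

/-- Contraction of the edge `uv` in `G`: the vertex `v` is merged into `u`
(and becomes isolated). -/
def contractEdge {V : Type} (G : SimpleGraph V) (u v : V) : SimpleGraph V :=
  SimpleGraph.fromRel fun a b =>
    (G.Adj a b ∧ a ≠ v ∧ b ≠ v) ∨ (a = u ∧ b ≠ v ∧ G.Adj v b) ∨ (b = u ∧ a ≠ v ∧ G.Adj a v)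

/-! Branch sets are disjoint, so an edge of a minor `H` is realized by its own edge of `G`, and a
`K₅` minor needs ten edges; `(K₃,₃ + xy) − e` and `(K₃,₃ + xy)/e` have only nine. If `G` has no
more vertices than `H`, the branch sets are singletons and `H` is a spanning subgraph of `G`; a
`K₃,₃` minor of a graph on six vertices is thus a 3-set joined to every vertex outside it, and a
finite check shows that neither graph has one. -/

open Finset SimpleGraph

namespace IsMinor

variable {W V : Type} {H : SimpleGraph W} {G : SimpleGraph V}

theorem of_injective_hom (φ : H →g G) (hφ : Function.Injective φ) : IsMinor H G := by
  refine ⟨fun w => {φ w}, fun w => Set.singleton_nonempty _, fun w => ?_,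
    fun a b hab => Set.disjoint_singleton.2 (hφ.ne hab),
    fun a b h => ⟨φ a, rfl, φ b, rfl, φ.map_adj h⟩⟩
  rw [induce_singleton_eq_top]
  exact connected_top

theorem card_dart_le [Fintype W] [Fintype V] [DecidableRel H.Adj] [DecidableRel G.Adj]
    (h : IsMinor H G) :
    Fintype.card H.Dart ≤ Fintype.card G.Dart := by
  obtain ⟨f, -, -, hdisj, hadj⟩ := h
  have hmem := subsingleton_setOfPred_mem_iff_pairwise_disjoint.2 hdisj
  choose s hs t ht hst using fun d : H.Dart => hadj d.adj
  refine Fintype.card_le_of_injective (fun d => ⟨(s d, t d), hst d⟩) fun d e hde => ?_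
  have hse : s d = s e := congrArg (·.fst) hde
  have hte : t d = t e := congrArg (·.snd) hde
  exact Dart.ext _ _ (Prod.ext (hmem _ (hs d) (hse ▸ hs e)) (hmem _ (ht d) (hte ▸ ht e)))

theorem card_edgeFinset_le [Fintype W] [Fintype V] [DecidableEq W] [DecidableEq V]
    [DecidableRel H.Adj] [DecidableRel G.Adj] (h : IsMinor H G) :
    #H.edgeFinset ≤ #G.edgeFinset := by
  have := h.card_dart_le
  rw [dart_card_eq_twice_card_edges, dart_card_eq_twice_card_edges] at this
  omega

theorem exists_bijective_hom [Finite V] (h : IsMinor H G) (hcard : Nat.card V ≤ Nat.card W) :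
    ∃ φ : H →g G, Function.Bijective φ := by
  obtain ⟨f, hne, -, hdisj, hadj⟩ := h
  have hmem := subsingleton_setOfPred_mem_iff_pairwise_disjoint.2 hdisj
  choose g hg using hne
  have hbij : Function.Bijective g :=
    Function.Injective.bijective_of_nat_card_le (fun a b hab => hmem (g a) (hg a) (hab ▸ hg b))
      hcard
  have hf : ∀ w, ∀ v ∈ f w, v = g w := fun w v hv => by
    obtain ⟨w', rfl⟩ := hbij.2 v
    rw [hmem (g w') hv (hg w')]
  refine ⟨⟨g, fun hab => ?_⟩, hbij⟩
  obtain ⟨v₁, hv₁, v₂, hv₂, hv⟩ := hadj hab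
  rwa [hf _ _ hv₁, hf _ _ hv₂] at hv

theorem exists_forall_adj_of_completeBipartiteGraph {α β : Type} [Fintype α] [Fintype β]
    [Fintype V] [DecidableEq V] (h : IsMinor (completeBipartiteGraph α β) G)
    (hcard : Fintype.card V ≤ Fintype.card α + Fintype.card β) :
    ∃ s : Finset V, #s = Fintype.card α ∧ ∀ a ∈ s, ∀ b ∉ s, G.Adj a b := by
  obtain ⟨φ, hφ⟩ := h.exists_bijective_hom (by simpa [Nat.card_eq_fintype_card] using hcard)
  refine ⟨univ.image (φ ∘ Sum.inl), ?_, ?_⟩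
  · rw [card_image_of_injective _ (hφ.1.comp Sum.inl_injective), card_univ]
  · simp only [mem_image, mem_univ, true_and, Function.comp_apply, forall_exists_index,
      forall_apply_eq_imp_iff]
    intro i b hb
    obtain ⟨w | j, rfl⟩ := hφ.2 b
    · exact absurd ⟨w, rfl⟩ hb
    · exact φ.map_adj (by simp)

end IsMinor

theorem planar_of_card_edgeFinset_le_of_forall_exists_not_adj {V : Type} {G : SimpleGraph V}
    [Fintype V] [DecidableEq V] [DecidableRel G.Adj] (hV : Fintype.card V ≤ 6)
    (hE : #G.edgeFinset ≤ 9) (hcut : ∀ s : Finset V, #s = 3 → ∃ a ∈ s, ∃ b ∉ s, ¬ G.Adj a b) :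
    Planar G := by
  refine ⟨fun h => ?_, fun h => ?_⟩
  · refine absurd (h.card_edgeFinset_le.trans hE) ?_
    rw [card_edgeFinset_top_eq_card_choose_two]
    decide
  · obtain ⟨s, hs, hadj⟩ := h.exists_forall_adj_of_completeBipartiteGraph (by simpa using hV)
    obtain ⟨a, ha, b, hb, hab⟩ := hcut s (by simpa using hs)
    exact hab (hadj a ha b hb)

instance : DecidableRel K33.Adj := inferInstanceAs (DecidableRel (SimpleGraph.fromRel _).Adj)

instance : DecidableRel GplusK33.Adj := inferInstanceAs (DecidableRel (K33 ⊔ _).Adj)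

instance (u v : Fin 6) : DecidableRel (contractEdge GplusK33 u v).Adj :=
  inferInstanceAs (DecidableRel (SimpleGraph.fromRel _).Adj)

theorem not_planar_GplusK33 : ¬ Planar GplusK33 := fun h =>
  h.2 (IsMinor.of_injective_hom ⟨finSumFinEquiv, fun {a b} => by
    revert a b; simp only [completeBipartiteGraph_adj]; decide⟩ finSumFinEquiv.injective)

theorem planar_GplusK33_deleteEdges {u v : Fin 6} (huv : K33.Adj u v) :
    Planar (GplusK33.deleteEdges {s(u, v)}) := by
  refine planar_of_card_edgeFinset_le_of_forall_exists_not_adj (by simp) ?_ ?_ <;>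
    revert u v <;> decide

theorem planar_contractEdge_GplusK33 {u v : Fin 6} (huv : K33.Adj u v) :
    Planar (contractEdge GplusK33 u v) := by
  refine planar_of_card_edgeFinset_le_of_forall_exists_not_adj (by simp) ?_ ?_ <;>
    revert u v <;> decide

/-- For every edge `e` of `K₃,₃`, both `(K₃,₃ + xy) − e` and `(K₃,₃ + xy)/e` are planar;
consequently `K₃,₃ + xy` is critical for planarity (it is itself nonplanar). -/
theorem stmt_11 :
    ¬ Planar GplusK33 ∧
    ∀ u v : Fin 6, K33.Adj u v →
      Planar (GplusK33.deleteEdges {s(u, v)}) ∧ Planar (contractEdge GplusK33 u v) :=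
  ⟨not_planar_GplusK33, fun _ _ huv =>
    ⟨planar_GplusK33_deleteEdges huv, planar_contractEdge_GplusK33 huv⟩⟩
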